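/- arXiv:2308.04685 — 3 statements merged into one kernel-verified Lean document; each statement's English description precedes it below -/
import Mathlib

section
/- Let α be an irrational number in (0,1) with sequence of best rational approximation denominators (q_n). For any real ℓ > 1, let q_{n_j} be the denominator with q_{n_j} < ℓ ≤ q_{n_j + 1}. Then there exists a positive integer q of the form q = m·q_{n_j} for some positive integer m, such that q ∈ [21ℓ/20, 41ℓ/20] and the distance from q·α to the nearest integer satisfies ‖q·α‖_{ℝ/ℤ} < 3/q_{n_j}. -/
/-- Distance from a real number to the nearest integer. -/
noncomputable def distInt (x : ℝ) : ℝ := |x - round x|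

lemma distInt_le (x : ℝ) (n : ℤ) : distInt x ≤ |x - n| := by
  unfold distInt
  rcases le_or_gt (1/2 : ℝ) (|x - n|) with h | h
  · exact (abs_sub_round x).trans h
  · have h2 : |x - round x| ≤ 1/2 := abs_sub_round x
    have h3 : |((round x - n : ℤ) : ℝ)| < 1 := by
      push_cast
      calc |(round x : ℝ) - n| ≤ |(round x : ℝ) - x| + |x - n| := abs_sub_le _ _ _
        _ < 1 := by rw [abs_sub_comm]; linarith
    rw [← Int.cast_abs] at h3
    have h4 : round x = n := by
      have : |round x - n| < 1 := by exact_mod_cast h3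
      have := abs_lt.mp this; omega
    rw [h4]

lemma distInt_nsmul (x : ℝ) (m : ℕ) : distInt (m * x) ≤ m * distInt x := by
  calc distInt (m * x) ≤ |m * x - ((m * round x : ℤ) : ℝ)| := distInt_le _ _
    _ = m * |x - round x| := by
        push_cast
        rw [← mul_sub, abs_mul, abs_of_nonneg (by positivity : (0:ℝ) ≤ (m:ℝ))]
    _ = m * distInt x := rfl

/-- Let `α ∈ (0,1)` be irrational with best rational approximation denominators `(q n)`
(positive, with the standard property `‖q n · α‖_{ℝ/ℤ} ≤ 1/q (n+1)`).  For any real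
`ℓ > 1`, with `j` such that `q j < ℓ ≤ q (j+1)`, there exists a positive multiple
`m · q j ∈ [21ℓ/20, 41ℓ/20]` with `‖m · q j · α‖_{ℝ/ℤ} < 3 / q j`. -/
theorem exists_multiple_denominator_in_window
    (α : ℝ) (hα : Irrational α) (h0 : 0 < α) (h1 : α < 1)
    (q : ℕ → ℕ) (hqpos : ∀ n, 0 < q n) (hqmono : StrictMono q)
    (hbest : ∀ n, distInt ((q n : ℝ) * α) ≤ 1 / (q (n + 1) : ℝ))
    (ℓ : ℝ) (hℓ : 1 < ℓ) (j : ℕ)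
    (hj₁ : (q j : ℝ) < ℓ) (hj₂ : ℓ ≤ (q (j + 1) : ℝ)) :
    ∃ m : ℕ, 0 < m ∧
      21 * ℓ / 20 ≤ (m * q j : ℝ) ∧ (m * q j : ℝ) ≤ 41 * ℓ / 20 ∧
      distInt ((m * q j : ℝ) * α) < 3 / (q j : ℝ) := by
  have hQ : (0:ℝ) < q j := by exact_mod_cast hqpos j
  have hQ1 : (0:ℝ) < q (j+1) := by exact_mod_cast hqpos (j+1)
  set x : ℝ := 21 * ℓ / (20 * q j) with hx
  have hxpos : 0 < x := by positivity
  refine ⟨⌈x⌉₊, Nat.ceil_pos.mpr hxpos, ?_, ?_, ?_⟩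
  · have h := Nat.le_ceil x
    rw [hx, div_le_iff₀ (by positivity)] at h
    push_cast
    nlinarith
  · have h := Nat.ceil_lt_add_one hxpos.le
    rw [hx, div_add' _ _ _ (by positivity), lt_div_iff₀ (by positivity)] at h
    push_cast
    nlinarith
  · have hmul : ((⌈x⌉₊ * q j : ℕ) : ℝ) * α = (⌈x⌉₊ : ℝ) * ((q j : ℝ) * α) := by
      push_cast; ring
    have hle : distInt ((⌈x⌉₊ * q j : ℝ) * α) ≤ (⌈x⌉₊ : ℝ) * (1 / (q (j+1) : ℝ)) := by
      calc distInt ((⌈x⌉₊ * q j : ℝ) * α) = distInt ((⌈x⌉₊ : ℝ) * ((q j : ℝ) * α)) := by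
            ring_nf
        _ ≤ (⌈x⌉₊ : ℝ) * distInt ((q j : ℝ) * α) := distInt_nsmul _ _
        _ ≤ (⌈x⌉₊ : ℝ) * (1 / (q (j+1) : ℝ)) := by
            exact mul_le_mul_of_nonneg_left (hbest j) (by positivity)
    refine hle.trans_lt ?_
    rw [mul_one_div, div_lt_div_iff₀ hQ1 hQ]
    -- need ⌈x⌉₊ * q j < 3 * q (j+1)
    have h := Nat.ceil_lt_add_one hxpos.le
    rw [hx, div_add' _ _ _ (by positivity), lt_div_iff₀ (by positivity)] at h
    nlinarith
end

section
/- Let A ∈ SU(1,1) with eigenvalues e^{iρ} and e^{-iρ} for some real ρ ≠ 0, and let P ∈ SU(1,1) satisfy P A P⁻¹ = diag(e^{iρ}, e^{-iρ}). Let W = [[iu, w], [conj(w), -iu]] ∈ su(1,1) with u ∈ ℝ, w ∈ ℂ, and write P W P⁻¹ = [[iu₊, w₊], [conj(w₊), -iu₊]]. Then |w₊| ≥ (1/2)·|ρ|⁻¹·‖P‖⁻²·‖A W - W A‖. -/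
/-!
Conjugating by `P` turns `[A, W]` into `[D, P W P⁻¹]` with `D = diag(e^{iρ}, e^{-iρ})`, which is
`(e^{iρ} - e^{-iρ})` times the off-diagonal matrix `N` with entries `wP`, `-conj wP`. Since
`Nᴴ N = |wP|² • 1`, `‖N‖ = |wP|`, and `|e^{iρ} - e^{-iρ}| = 2 |sin ρ| ≤ 2 |ρ|`. Undoing the
conjugation costs a factor `‖P⁻¹‖ ‖P‖ ≤ ‖P‖²`: for `P ∈ SU(1,1)`, `P⁻¹ = J Pᴴ J` with the unitary
`J = diag(1, -1)`.
-/

open Complex Matrix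

/-- Operator norm of a `2×2` complex matrix acting on `ℓ²`. -/
noncomputable def opNorm2 (P : Matrix (Fin 2) (Fin 2) ℂ) : ℝ :=
  ‖(Matrix.toEuclideanCLM (𝕜 := ℂ) (n := Fin 2) P :
      EuclideanSpace ℂ (Fin 2) →L[ℂ] EuclideanSpace ℂ (Fin 2))‖

open ComplexConjugate

lemma opNorm2_nonneg (X : Matrix (Fin 2) (Fin 2) ℂ) : 0 ≤ opNorm2 X :=
  norm_nonneg _

lemma opNorm2_one : opNorm2 1 = 1 := by
  rw [opNorm2, map_one, norm_one]

lemma opNorm2_mul_le (X Y : Matrix (Fin 2) (Fin 2) ℂ) :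
    opNorm2 (X * Y) ≤ opNorm2 X * opNorm2 Y := by
  rw [opNorm2, map_mul]
  exact norm_mul_le _ _

lemma opNorm2_smul (c : ℂ) (X : Matrix (Fin 2) (Fin 2) ℂ) :
    opNorm2 (c • X) = ‖c‖ * opNorm2 X := by
  rw [opNorm2, map_smul, norm_smul, opNorm2]

lemma opNorm2_conjTranspose (X : Matrix (Fin 2) (Fin 2) ℂ) : opNorm2 Xᴴ = opNorm2 X := by
  rw [opNorm2, opNorm2, ← star_eq_conjTranspose, map_star, ContinuousLinearMap.star_eq_adjoint]
  exact LinearIsometryEquiv.norm_map ContinuousLinearMap.adjoint _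

lemma opNorm2_sq (X : Matrix (Fin 2) (Fin 2) ℂ) : opNorm2 X ^ 2 = opNorm2 (Xᴴ * X) := by
  rw [opNorm2, opNorm2, map_mul, ← star_eq_conjTranspose, map_star,
    CStarRing.norm_star_mul_self (x := toEuclideanCLM (𝕜 := ℂ) X), sq]

lemma opNorm2_eq_of_conjTranspose_mul_self {X : Matrix (Fin 2) (Fin 2) ℂ} {c : ℝ} (hc : 0 ≤ c)
    (hX : Xᴴ * X = ((c ^ 2 : ℝ) : ℂ) • 1) : opNorm2 X = c := by
  rw [← sq_eq_sq₀ (opNorm2_nonneg X) hc, opNorm2_sq, hX, opNorm2_smul, opNorm2_one, mul_one,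
    norm_real, Real.norm_of_nonneg (by positivity)]

lemma opNorm2_mul_mul_le (X Y Z : Matrix (Fin 2) (Fin 2) ℂ) :
    opNorm2 (X * Y * Z) ≤ opNorm2 X * opNorm2 Y * opNorm2 Z :=
  (opNorm2_mul_le _ _).trans <|
    mul_le_mul_of_nonneg_right (opNorm2_mul_le _ _) (opNorm2_nonneg Z)

lemma opNorm2_offDiag (w : ℂ) : opNorm2 !![0, w; -conj w, 0] = ‖w‖ := by
  refine opNorm2_eq_of_conjTranspose_mul_self (norm_nonneg w) ?_
  rw [ofReal_pow, ← mul_conj']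
  ext i j
  fin_cases i <;> fin_cases j <;> simp [mul_apply, Fin.sum_univ_two, mul_comm]

section SU11

variable {p q : ℂ}

lemma su11_adjugate_mul_self (hpq : ‖p‖ ^ 2 - ‖q‖ ^ 2 = 1) :
    !![conj p, -q; -conj q, p] * !![p, q; conj q, conj p] = 1 := by
  have hpq' : conj p * p - conj q * q = 1 := by
    rw [conj_mul', conj_mul']
    exact_mod_cast hpq
  rw [mul_fin_two, one_fin_two]
  ext i j
  fin_cases i <;> fin_cases j <;> simp
  · linear_combination hpq'
  · ring
  · ring
  · linear_combination hpq'

lemma inv_su11_eq (hpq : ‖p‖ ^ 2 - ‖q‖ ^ 2 = 1) :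
    (!![p, q; conj q, conj p])⁻¹ = !![conj p, -q; -conj q, p] :=
  inv_eq_left_inv (su11_adjugate_mul_self hpq)

lemma su11_adjugate_eq :
    !![conj p, -q; -conj q, p] =
      !![1, 0; 0, -1] * (!![p, q; conj q, conj p])ᴴ * !![1, 0; 0, -1] := by
  ext i j
  fin_cases i <;> fin_cases j <;> simp [mul_apply, Fin.sum_univ_two, vecMul, dotProduct]

lemma opNorm2_inv_su11_le (hpq : ‖p‖ ^ 2 - ‖q‖ ^ 2 = 1) :
    opNorm2 (!![p, q; conj q, conj p])⁻¹ ≤ opNorm2 !![p, q; conj q, conj p] := by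
  have hJ : opNorm2 !![1, 0; 0, -1] = 1 :=
    opNorm2_eq_of_conjTranspose_mul_self zero_le_one
      (by ext i j; fin_cases i <;> fin_cases j <;> simp [mul_apply, Fin.sum_univ_two])
  calc _ = opNorm2 (!![1, 0; 0, -1] * (!![p, q; conj q, conj p])ᴴ * !![1, 0; 0, -1]) := by
        rw [inv_su11_eq hpq, su11_adjugate_eq]
    _ ≤ _ := opNorm2_mul_mul_le _ _ _
    _ = _ := by rw [hJ, opNorm2_conjTranspose, one_mul, mul_one]

end SU11

lemma commutator_eq_of_conj {R : Type*} [Ring R] {P Q a b a' b' : R} (h : Q * P = 1)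
    (ha : P * a * Q = a') (hb : P * b * Q = b') :
    a * b - b * a = Q * (a' * b' - b' * a') * P := by
  have hQP (x : R) : Q * (P * x) = x := by rw [← mul_assoc, h, one_mul]
  subst ha hb
  simp only [mul_sub, sub_mul, mul_assoc, hQP, h, mul_one]

lemma diag_commutator_fin_two (d₁ d₂ x y w : ℂ) :
    !![d₁, 0; 0, d₂] * !![x, w; conj w, y] - !![x, w; conj w, y] * !![d₁, 0; 0, d₂] =
      (d₁ - d₂) • !![0, w; -conj w, 0] := by
  ext i j
  fin_cases i <;> fin_cases j <;> simp <;> ring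

lemma norm_exp_I_mul_sub_exp_neg_le (ρ : ℝ) :
    ‖exp (I * ρ) - exp (-(I * ρ))‖ ≤ 2 * |ρ| := by
  have h : exp (I * ρ) - exp (-(I * ρ)) = 2 * Real.sin ρ * I := by
    rw [ofReal_sin, two_sin, mul_assoc, I_mul_I, neg_mul, mul_comm I]
    ring
  rw [h, norm_mul, norm_mul, Complex.norm_two, norm_I, mul_one, norm_real, Real.norm_eq_abs]
  exact mul_le_mul_of_nonneg_left Real.abs_sin_le_abs zero_le_two

theorem conjugated_offdiagonal_lower_bound_general
    (p q : ℂ) (ρ : ℝ)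
    (A P : Matrix (Fin 2) (Fin 2) ℂ)
    (hP : P = !![p, q; (starRingEnd ℂ) q, (starRingEnd ℂ) p])
    (hPsu : ‖p‖ ^ 2 - ‖q‖ ^ 2 = 1)
    (hdiag : P * A * P⁻¹ =
      !![Complex.exp (Complex.I * ρ), 0; 0, Complex.exp (-(Complex.I * ρ))])
    (W : Matrix (Fin 2) (Fin 2) ℂ)
    (uP : ℝ) (wP : ℂ)
    (hWP : P * W * P⁻¹ =
      !![Complex.I * (uP : ℂ), wP; (starRingEnd ℂ) wP, -(Complex.I * (uP : ℂ))]) :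
    ‖wP‖ ≥
      (1 / 2) * |ρ|⁻¹ * ((opNorm2 P) ^ 2)⁻¹ * opNorm2 (A * W - W * A) := by
  have hPinv : P⁻¹ * P = 1 := by
    rw [hP, inv_su11_eq hPsu]
    exact su11_adjugate_mul_self hPsu
  have hcomm : A * W - W * A =
      P⁻¹ * ((exp (I * ρ) - exp (-(I * ρ))) • !![0, wP; -conj wP, 0]) * P := by
    rw [commutator_eq_of_conj hPinv hdiag hWP, diag_commutator_fin_two]
  have hbound : opNorm2 (A * W - W * A) ≤ 2 * |ρ| * opNorm2 P ^ 2 * ‖wP‖ :=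
    calc opNorm2 (A * W - W * A)
        ≤ opNorm2 P⁻¹ * (‖exp (I * ρ) - exp (-(I * ρ))‖ * ‖wP‖) * opNorm2 P := by
          rw [hcomm, ← opNorm2_offDiag wP, ← opNorm2_smul]
          exact opNorm2_mul_mul_le _ _ _
      _ ≤ opNorm2 P * (2 * |ρ| * ‖wP‖) * opNorm2 P := by
          have hP_nonneg := opNorm2_nonneg P
          gcongr
          · rw [hP]; exact opNorm2_inv_su11_le hPsu
          · exact norm_exp_I_mul_sub_exp_neg_le ρ
      _ = 2 * |ρ| * opNorm2 P ^ 2 * ‖wP‖ := by ring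
  calc (1 / 2) * |ρ|⁻¹ * (opNorm2 P ^ 2)⁻¹ * opNorm2 (A * W - W * A)
      = (2 * |ρ| * opNorm2 P ^ 2)⁻¹ * opNorm2 (A * W - W * A) := by rw [mul_inv, mul_inv]; ring
    _ ≤ ‖wP‖ := inv_mul_le_of_le_mul₀ (by positivity) (norm_nonneg wP) hbound

/-- Let `A ∈ SU(1,1)` with eigenvalues `e^{±iρ}` (`ρ ≠ 0`) and `P ∈ SU(1,1)` with
`P A P⁻¹ = diag(e^{iρ}, e^{-iρ})`.  For `W = [[iu, w], [conj w, -iu]] ∈ su(1,1)` write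
`P W P⁻¹ = [[iuP, wP], [conj wP, -iuP]]`.  Then
`|wP| ≥ (1/2) |ρ|⁻¹ ‖P‖⁻² ‖A W - W A‖`. -/
theorem conjugated_offdiagonal_lower_bound
    (a b p q : ℂ) (ρ : ℝ) (hρ : ρ ≠ 0)
    (A P : Matrix (Fin 2) (Fin 2) ℂ)
    (hA : A = !![a, b; (starRingEnd ℂ) b, (starRingEnd ℂ) a])
    (hAsu : ‖a‖ ^ 2 - ‖b‖ ^ 2 = 1)
    (hP : P = !![p, q; (starRingEnd ℂ) q, (starRingEnd ℂ) p])
    (hPsu : ‖p‖ ^ 2 - ‖q‖ ^ 2 = 1)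
    (hdiag : P * A * P⁻¹ =
      !![Complex.exp (Complex.I * ρ), 0; 0, Complex.exp (-(Complex.I * ρ))])
    (u : ℝ) (w : ℂ) (W : Matrix (Fin 2) (Fin 2) ℂ)
    (hW : W = !![Complex.I * (u : ℂ), w; (starRingEnd ℂ) w, -(Complex.I * (u : ℂ))])
    (uP : ℝ) (wP : ℂ)
    (hWP : P * W * P⁻¹ =
      !![Complex.I * (uP : ℂ), wP; (starRingEnd ℂ) wP, -(Complex.I * (uP : ℂ))]) :
    ‖wP‖ ≥
      (1 / 2) * |ρ|⁻¹ * ((opNorm2 P) ^ 2)⁻¹ * opNorm2 (A * W - W * A) :=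
  conjugated_offdiagonal_lower_bound_general p q ρ A P hP hPsu hdiag W uP wP hWP
end

section
/- Suppose real sequences (ξ_j), (m_j), (M_j) for j ≥ j₀+1 satisfy ξ_{j₀+1} ≥ c > 0, m_{j₀+1} ≤ c/100, and at each step either (i) ξ_{j+1} ≥ ξ_j - η_j and m_{j+1} ≤ m_j + η_j, or (ii) ξ_{j+1} ≥ ξ_j - 3 m_j - η_j and m_{j+1} ≤ c/(100·2^j), where η_j ≤ c/(11·2^{j+1}) for all j. If ξ_{j₀+1} ≥ 10 m_{j₀+1} + c/2^{j₀+1}, then for all j ≥ j₀+1 one has ξ_j ≥ 10 m_j + c/2^j. -/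
/-- Abstract inductive scheme (Lemma 6.5 of the paper): if `ξ_{j₀+1} ≥ c > 0`,
`m_{j₀+1} ≤ c/100`, at each step `j ≥ j₀+1` either
(i) `ξ_{j+1} ≥ ξ_j - η_j` and `m_{j+1} ≤ m_j + η_j`, or
(ii) `ξ_{j+1} ≥ ξ_j - 3 m_j - η_j` and `m_{j+1} ≤ c/(100·2^j)`,
with `η_j ≤ c/(11·2^{j+1})`, and the base case `ξ_{j₀+1} ≥ 10 m_{j₀+1} + c/2^{j₀+1}`
holds, then `ξ_j ≥ 10 m_j + c/2^j` for all `j ≥ j₀+1`. -/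
theorem xi_lower_bound_induction (ξ m M η : ℕ → ℝ) (c : ℝ) (j₀ : ℕ)
    (hc : 0 < c)
    (hξ0 : ξ (j₀ + 1) ≥ c)
    (hm0 : m (j₀ + 1) ≤ c / 100)
    (hstep : ∀ j, j₀ + 1 ≤ j →
      (ξ (j + 1) ≥ ξ j - η j ∧ m (j + 1) ≤ m j + η j) ∨
      (ξ (j + 1) ≥ ξ j - 3 * m j - η j ∧ m (j + 1) ≤ c / (100 * 2 ^ j)))
    (hη : ∀ j, η j ≤ c / (11 * 2 ^ (j + 1)))
    (hbase : ξ (j₀ + 1) ≥ 10 * m (j₀ + 1) + c / 2 ^ (j₀ + 1)) :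
    ∀ j, j₀ + 1 ≤ j → ξ j ≥ 10 * m j + c / 2 ^ j := by
  have key : ∀ j, j₀ + 1 ≤ j →
      ξ j ≥ 10 * m j + c / 2 ^ j ∧
      ξ j - 3 * m j ≥ 834 / 1100 * c + 466 / 1100 * (c / 2 ^ j) := by
    intro j hj
    induction j, hj using Nat.le_induction with
    | base =>
      refine ⟨hbase, ?_⟩
      have h2 : (2 : ℝ) ≤ 2 ^ (j₀ + 1) := by
        calc (2:ℝ) = 2 ^ 1 := (pow_one 2).symm
        _ ≤ 2 ^ (j₀ + 1) := pow_le_pow_right₀ one_le_two (Nat.le_add_left 1 j₀)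
      have hx : c / 2 ^ (j₀ + 1) ≤ c / 2 :=
        div_le_div_of_nonneg_left hc.le two_pos h2
      linarith
    | succ j hj ih =>
      obtain ⟨ih1, ih2⟩ := ih
      have hpow : (0 : ℝ) < 2 ^ j := by positivity
      have h2j : (2 : ℝ) ≤ 2 ^ j := by
        calc (2:ℝ) = 2 ^ 1 := (pow_one 2).symm
        _ ≤ 2 ^ j := pow_le_pow_right₀ one_le_two (le_trans (Nat.le_add_left 1 j₀) hj)
      set x := c / 2 ^ j with hxdef
      have hx0 : 0 < x := div_pos hc hpow
      have hxc : x ≤ c / 2 := div_le_div_of_nonneg_left hc.le two_pos h2j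
      have hhalf : c / 2 ^ (j + 1) = x / 2 := by
        rw [hxdef, pow_succ]; ring
      have hη100 : c / (100 * 2 ^ j) = x / 100 := by
        rw [hxdef]; ring
      have hηj : η j ≤ x / 22 := by
        have := hη j
        have : c / (11 * 2 ^ (j + 1)) = x / 22 := by
          rw [hxdef, pow_succ]; ring
        linarith [hη j, this ▸ hη j]
      rcases hstep j hj with ⟨h1, h2⟩ | ⟨h1, h2⟩
      · constructor
        · rw [hhalf]; linarith
        · rw [hhalf]; linarith
      · rw [hη100] at h2
        constructor
        · rw [hhalf]; linarith
        · rw [hhalf]; linarith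
  intro j hj
  exact (key j hj).1
end
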